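/- arXiv:1106.2825 — 3 statements merged into one kernel-verified Lean document; each statement's English description precedes it below -/
import Mathlib

section
/- For every r ≥ 2 and every e with 2 ≤ e ≤ r, there exists an artinian Gorenstein algebra of codimension r, presented by quadrics, with socle degree e. -/
open MvPolynomial

/-- The degree-`d` graded piece of the quotient `R/I`, as the image of the
homogeneous polynomials of degree `d`. -/
noncomputable def quotPiece (k : Type*) [Field k] (σ : Type*)
    (I : Ideal (MvPolynomial σ k)) (d : ℕ) :
    Submodule k (MvPolynomial σ k ⧸ I) :=
  Submodule.map (Ideal.Quotient.mkₐ k I).toLinearMap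
    (MvPolynomial.homogeneousSubmodule σ k d)

/-- The Hilbert function of the standard graded algebra `R/I`. -/
noncomputable def hilb (k : Type*) [Field k] (σ : Type*)
    (I : Ideal (MvPolynomial σ k)) (d : ℕ) : ℕ :=
  Module.finrank k (quotPiece k σ I d)

/-- `I` is a homogeneous ideal with respect to the standard grading. -/
def IsHomog (k : Type*) [Field k] (σ : Type*) (I : Ideal (MvPolynomial σ k)) : Prop :=
  ∀ p ∈ I, ∀ d : ℕ, MvPolynomial.homogeneousComponent d p ∈ I

/-- `I` contains no nonzero linear form. -/
def NoLinearForms (k : Type*) [Field k] (σ : Type*) (I : Ideal (MvPolynomial σ k)) : Prop :=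
  ∀ p : MvPolynomial σ k, p.IsHomogeneous 1 → p ∈ I → p = 0

/-- `I` is generated by homogeneous forms of degree 2. -/
def GenByQuadrics (k : Type*) [Field k] (σ : Type*) (I : Ideal (MvPolynomial σ k)) : Prop :=
  ∃ S : Set (MvPolynomial σ k), (∀ p ∈ S, p.IsHomogeneous 2) ∧ I = Ideal.span S

/-- The graded algebra `R/I` is artinian: its Hilbert function eventually vanishes. -/
def ArtinianHF (k : Type*) [Field k] (σ : Type*) (I : Ideal (MvPolynomial σ k)) : Prop :=
  ∃ N : ℕ, ∀ d : ℕ, N ≤ d → hilb k σ I d = 0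

/-- The socle of `R/I`: the annihilator of the irrelevant maximal ideal. -/
noncomputable def socle (k : Type*) [Field k] (σ : Type*) (I : Ideal (MvPolynomial σ k)) :
    Submodule k (MvPolynomial σ k ⧸ I) :=
  ⨅ i : σ, LinearMap.ker (LinearMap.mulLeft k (Ideal.Quotient.mk I (MvPolynomial.X i)))

/-- An artinian graded algebra `R/I` is Gorenstein iff its socle is 1-dimensional,
i.e. its Cohen-Macaulay type is 1. -/
def GorensteinHF (k : Type*) [Field k] (σ : Type*) (I : Ideal (MvPolynomial σ k)) : Prop :=
  Module.finrank k (socle k σ I) = 1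

/-- `e` is the socle degree of `R/I`: the top degree where the Hilbert function
does not vanish. -/
def IsSocleDegree (k : Type*) [Field k] (σ : Type*) (I : Ideal (MvPolynomial σ k))
    (e : ℕ) : Prop :=
  hilb k σ I e ≠ 0 ∧ ∀ d : ℕ, e < d → hilb k σ I d = 0

/-- `I` contains a regular sequence consisting of `r` quadrics. -/
def ContainsRegSeqQuadrics (k : Type*) [Field k] (r : ℕ)
    (I : Ideal (MvPolynomial (Fin r) k)) : Prop :=
  ∃ Q : Fin r → MvPolynomial (Fin r) k,
    (∀ i, (Q i).IsHomogeneous 2) ∧ (∀ i, Q i ∈ I) ∧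
      RingTheory.Sequence.IsRegular (MvPolynomial (Fin r) k) (List.ofFn Q)

/-- An artinian Gorenstein standard graded algebra presented by quadrics. -/
def AGQuad (k : Type*) [Field k] (σ : Type*) (I : Ideal (MvPolynomial σ k)) : Prop :=
  IsHomog k σ I ∧ NoLinearForms k σ I ∧ GenByQuadrics k σ I ∧
    ArtinianHF k σ I ∧ GorensteinHF k σ I

/-- The linear form with coefficient vector `c`. -/
noncomputable def linForm (k : Type*) [Field k] (r : ℕ) (c : Fin r → k) :
    MvPolynomial (Fin r) k :=
  ∑ i, MvPolynomial.C (c i) * MvPolynomial.X i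

/-- The degree-2 part of an ideal, as a `k`-vector space. -/
noncomputable def quadPart (k : Type*) [Field k] (σ : Type*)
    (I : Ideal (MvPolynomial σ k)) : Submodule k (MvPolynomial σ k) :=
  Submodule.restrictScalars k I ⊓ MvPolynomial.homogeneousSubmodule σ k 2

/-!
Write `xᵢ = X i` for `i < s` and `yⱼ = X j` for `s ≤ j`. The ideal
`(xᵢxⱼ (i ≠ j), xᵢ² - x₀², yⱼ²)` presents `A ⊗ (k[y]/(y²))^⊗(r - s)`, where `A` has
`h`-vector `(1, s, 1)`; with `s = r - e + 2` the socle degree is `2 + (r - s) = e`.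

Everything is computed through a normal form. A monomial survives the monomial relations
(`IsStandard`) iff it is squarefree in the `y`s and its `x`-part is `1`, `xᵢ` or `xᵢ²`; using
`xᵢ² ≡ x₀²` it becomes normal (`IsNormal`). The `k`-linear map sending each monomial to its
normal form kills the ideal and is congruent to the identity modulo it, so its kernel is the
ideal and the normal monomials form a basis of the quotient. None of them has degree above
`2 + (r - s)`, and `x₀² y_s ⋯ y_{r-1}` is the only one of that degree. For the socle:
multiplication by a variable maps normal monomials injectively to normal monomials or to `0`,
and every normal monomial except `x₀² y_s ⋯ y_{r-1}` is moved to a nonzero one by some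
variable; hence a socle element in normal form is a multiple of that monomial.
-/

namespace GorensteinQuadrics

open Finsupp

section Exponents

variable {r : ℕ} (s : ℕ)

def xdeg (v : Fin r →₀ ℕ) : ℕ := ∑ i : Fin r, if (i : ℕ) < s then v i else 0

def ydeg (v : Fin r →₀ ℕ) : ℕ := ∑ i : Fin r, if (i : ℕ) < s then 0 else v i

noncomputable def ypart (v : Fin r →₀ ℕ) : Fin r →₀ ℕ := v.filter fun i => s ≤ (i : ℕ)

def SquarefreeY (v : Fin r →₀ ℕ) : Prop := ∀ j : Fin r, s ≤ (j : ℕ) → v j ≤ 1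

def AtMostOneX (v : Fin r →₀ ℕ) : Prop := ∃ m : Fin r, ∀ i : Fin r, (i : ℕ) < s → i ≠ m → v i = 0

def IsStandard (v : Fin r →₀ ℕ) : Prop := SquarefreeY s v ∧ AtMostOneX s v ∧ xdeg s v ≤ 2

lemma degree_eq_xdeg_add_ydeg (v : Fin r →₀ ℕ) : v.degree = xdeg s v + ydeg s v := by
  rw [degree_eq_sum, xdeg, ydeg, ← Finset.sum_add_distrib]
  exact Finset.sum_congr rfl fun i _ => by split_ifs <;> omega

lemma xdeg_add (v w : Fin r →₀ ℕ) : xdeg s (v + w) = xdeg s v + xdeg s w := by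
  rw [xdeg, xdeg, xdeg, ← Finset.sum_add_distrib]
  exact Finset.sum_congr rfl fun i _ => by simp only [Finsupp.add_apply]; split_ifs <;> omega

lemma xdeg_single (i : Fin r) (n : ℕ) : xdeg s (single i n) = if (i : ℕ) < s then n else 0 := by
  rw [xdeg, Finset.sum_eq_single i (fun j _ hj => by simp [single_eq_of_ne hj]) (by simp)]
  simp

lemma xdeg_eq_zero_iff {v : Fin r →₀ ℕ} : xdeg s v = 0 ↔ ∀ i : Fin r, (i : ℕ) < s → v i = 0 := by
  simp only [xdeg, Finset.sum_eq_zero_iff, Finset.mem_univ, true_implies, ite_eq_right_iff]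

lemma ypart_apply (v : Fin r →₀ ℕ) (i : Fin r) :
    ypart s v i = if s ≤ (i : ℕ) then v i else 0 :=
  filter_apply _ _ _

lemma ypart_add (v w : Fin r →₀ ℕ) : ypart s (v + w) = ypart s v + ypart s w :=
  filter_add

lemma ypart_single_of_lt {i : Fin r} (hi : (i : ℕ) < s) (n : ℕ) : ypart s (single i n) = 0 := by
  ext j
  rw [ypart_apply, Finsupp.coe_zero, Pi.zero_apply, single_apply]
  split_ifs with h1 h2 <;> first | rfl | (subst h2; omega)

lemma xdeg_ypart (v : Fin r →₀ ℕ) : xdeg s (ypart s v) = 0 :=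
  (xdeg_eq_zero_iff s).2 fun i hi => by rw [ypart_apply, if_neg (by omega)]

lemma ydeg_ypart (v : Fin r →₀ ℕ) : ydeg s (ypart s v) = ydeg s v :=
  Finset.sum_congr rfl fun i _ => by rw [ypart_apply]; split_ifs <;> first | rfl | omega

variable {s}

lemma AtMostOneX.eq_zero_of_ne {v : Fin r →₀ ℕ} (h : AtMostOneX s v) {m : Fin r}
    (hm : (m : ℕ) < s) (hvm : v m ≠ 0) {i : Fin r} (hi : (i : ℕ) < s) (him : i ≠ m) : v i = 0 := by
  obtain ⟨m', hm'⟩ := h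
  by_cases h : i = m'
  · exact absurd (hm' m hm fun e => him (h.trans e.symm)) hvm
  · exact hm' i hi h

lemma exists_ne_zero_of_xdeg_ne_zero {v : Fin r →₀ ℕ} (h : xdeg s v ≠ 0) :
    ∃ m : Fin r, (m : ℕ) < s ∧ v m ≠ 0 := by
  contrapose! h
  exact (xdeg_eq_zero_iff s).2 h

lemma AtMostOneX.xdeg_eq_apply {v : Fin r →₀ ℕ} (h : AtMostOneX s v) {m : Fin r}
    (hm : (m : ℕ) < s) (hvm : v m ≠ 0) : xdeg s v = v m := by
  rw [xdeg, Finset.sum_eq_single m (fun i _ him => by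
    split_ifs with hi
    exacts [h.eq_zero_of_ne hm hvm hi him, rfl]) (by simp), if_pos hm]

lemma eq_ypart_add_single {v : Fin r →₀ ℕ} (h : AtMostOneX s v) {m : Fin r} (hm : (m : ℕ) < s)
    (hvm : v m ≠ 0) : v = ypart s v + single m (xdeg s v) := by
  ext i
  rw [Finsupp.add_apply, ypart_apply, single_apply, h.xdeg_eq_apply hm hvm]
  split_ifs with h1 h2 h2
  · subst h2; omega
  · simp
  · subst h2; simp
  · simpa using h.eq_zero_of_ne hm hvm (by omega) (Ne.symm h2)

end Exponents

section Normalize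

variable {r s : ℕ}

lemma squarefreeY_add_single_of_lt {v : Fin r →₀ ℕ} (h : SquarefreeY s v) {i : Fin r}
    (hi : (i : ℕ) < s) (n : ℕ) : SquarefreeY s (v + single i n) := fun j hj => by
  rw [Finsupp.add_apply, single_eq_of_ne (fun e => by subst e; omega), add_zero]
  exact h j hj

lemma atMostOneX_add_single {v : Fin r →₀ ℕ} {m : Fin r}
    (h : ∀ i : Fin r, (i : ℕ) < s → i ≠ m → v i = 0) (n : ℕ) : AtMostOneX s (v + single m n) :=
  ⟨m, fun i hi him => by rw [Finsupp.add_apply, h i hi him, single_eq_of_ne him, add_zero]⟩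

lemma AtMostOneX.add_single_of_le {v : Fin r →₀ ℕ} (h : AtMostOneX s v) {j : Fin r}
    (hj : s ≤ (j : ℕ)) (n : ℕ) : AtMostOneX s (v + single j n) := by
  obtain ⟨m, hm⟩ := h
  refine ⟨m, fun i hi him => ?_⟩
  rw [Finsupp.add_apply, hm i hi him, single_eq_of_ne (fun e => by subst e; omega), add_zero]

lemma isStandard_add_single_two_iff {w : Fin r →₀ ℕ} {i : Fin r} (hi : (i : ℕ) < s) :
    IsStandard s (w + single i 2) ↔ SquarefreeY s w ∧ xdeg s w = 0 := by
  rw [IsStandard, xdeg_add, xdeg_single, if_pos hi]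
  refine ⟨fun ⟨hy, _, hx⟩ => ⟨fun j hj => ?_, by omega⟩,
    fun ⟨hy, hx⟩ => ⟨squarefreeY_add_single_of_lt hy hi 2,
      atMostOneX_add_single (fun j hj _ => (xdeg_eq_zero_iff s).1 hx j hj) 2, by omega⟩⟩
  have := hy j hj
  rwa [Finsupp.add_apply, single_eq_of_ne (fun e => by subst e; omega), add_zero] at this

variable [NeZero r]

lemma val_zero_lt (hs : 0 < s) : ((0 : Fin r) : ℕ) < s := by
  rwa [Fin.val_zero]

variable (s) in
/-- Rewrites the `x`-part `xᵢ²` of a monomial to `x₀²`, the normal form modulo `xᵢ² - x₀²`. -/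
noncomputable def normalize (v : Fin r →₀ ℕ) : Fin r →₀ ℕ :=
  if xdeg s v = 2 then ypart s v + single 0 2 else v

lemma xdeg_normalize (hs : 0 < s) (v : Fin r →₀ ℕ) : xdeg s (normalize s v) = xdeg s v := by
  unfold normalize
  split_ifs with h
  · rw [xdeg_add, xdeg_ypart, xdeg_single, if_pos (val_zero_lt hs), h]
  · rfl

lemma ypart_normalize (hs : 0 < s) (v : Fin r →₀ ℕ) : ypart s (normalize s v) = ypart s v := by
  unfold normalize
  split_ifs
  · rw [ypart_add, ypart_single_of_lt s (val_zero_lt hs), add_zero]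
    ext i
    rw [ypart_apply, ypart_apply]
    split_ifs <;> rfl
  · rfl

lemma normalize_normalize (hs : 0 < s) (v : Fin r →₀ ℕ) :
    normalize s (normalize s v) = normalize s v := by
  by_cases h : xdeg s v = 2
  · have h' : xdeg s (normalize s v) = 2 := by rw [xdeg_normalize hs, h]
    rw [normalize, if_pos h', ypart_normalize hs, normalize, if_pos h]
  · rw [normalize, if_neg (by rwa [xdeg_normalize hs])]

lemma isStandard_normalize (hs : 0 < s) {v : Fin r →₀ ℕ} (h : IsStandard s v) :
    IsStandard s (normalize s v) := by
  unfold normalize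
  split_ifs with h2
  · refine ⟨fun j hj => ?_, atMostOneX_add_single (fun i hi _ => ?_) 2, ?_⟩
    · have := val_zero_lt (r := r) hs
      rw [Finsupp.add_apply, ypart_apply, if_pos hj, single_eq_of_ne (fun e => by subst e; omega),
        add_zero]
      exact h.1 j hj
    · rw [ypart_apply, if_neg (by omega)]
    · rw [xdeg_add, xdeg_ypart, xdeg_single, if_pos (val_zero_lt hs)]
  · exact h

variable (s) in
def IsNormal (v : Fin r →₀ ℕ) : Prop := IsStandard s v ∧ normalize s v = v

lemma isNormal_normalize (hs : 0 < s) {v : Fin r →₀ ℕ} (h : IsStandard s v) :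
    IsNormal s (normalize s v) :=
  ⟨isStandard_normalize hs h, normalize_normalize hs v⟩

lemma IsNormal.eq_of_xdeg_eq_two {v : Fin r →₀ ℕ} (h : IsNormal s v) (h2 : xdeg s v = 2) :
    v = ypart s v + single 0 2 := by
  conv_lhs => rw [← h.2]
  rw [normalize, if_pos h2]

end Normalize

section Socle

variable {r s : ℕ}

lemma squarefreeY_add_single_of_eq_zero {v : Fin r →₀ ℕ} (h : SquarefreeY s v) {j : Fin r}
    (hvj : v j = 0) : SquarefreeY s (v + single j 1) := fun i hi => by
  rw [Finsupp.add_apply, single_apply]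
  split_ifs with hji
  · subst hji; omega
  · simpa using h i hi

variable (r s) in
lemma sum_ite_val_lt_eq : (∑ i : Fin r, if (i : ℕ) < s then 0 else 1) = r - s := by
  rw [Finset.sum_ite, Finset.sum_const_zero, zero_add, Finset.sum_const, smul_eq_mul, mul_one,
    Finset.filter_not, Finset.card_univ_sdiff, Fin.card_filter_val_lt, Fintype.card_fin]
  omega

lemma ydeg_le_of_squarefreeY {v : Fin r →₀ ℕ} (h : SquarefreeY s v) : ydeg s v ≤ r - s :=
  calc ydeg s v ≤ ∑ i : Fin r, if (i : ℕ) < s then 0 else 1 :=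
        Finset.sum_le_sum fun i _ => by split_ifs with hi <;> first | rfl | exact h i (by omega)
    _ = r - s := sum_ite_val_lt_eq r s

lemma degree_le_of_isStandard {v : Fin r →₀ ℕ} (h : IsStandard s v) : v.degree ≤ 2 + (r - s) := by
  have := ydeg_le_of_squarefreeY h.1
  have := h.2.2
  rw [degree_eq_xdeg_add_ydeg s]
  omega

variable [NeZero r]

lemma isNormal_of_degree_le_one {v : Fin r →₀ ℕ} (hd : v.degree ≤ 1) : IsNormal s v := by
  have hx : xdeg s v ≤ 1 := by
    have := degree_eq_xdeg_add_ydeg s v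
    omega
  have hx1 : AtMostOneX s v := by
    by_cases hex : ∃ m, v m ≠ 0
    · obtain ⟨m, hm⟩ := hex
      refine ⟨m, fun i _ him => ?_⟩
      have : v i + v m ≤ v.degree := by
        rw [degree_eq_sum, ← Finset.sum_pair him]
        exact Finset.sum_le_sum_of_subset (Finset.subset_univ _)
      omega
    · exact ⟨0, fun i _ _ => not_not.1 fun h => hex ⟨i, h⟩⟩
  exact ⟨⟨fun j _ => (le_degree j v).trans hd, hx1, by omega⟩, by rw [normalize, if_neg (by omega)]⟩

variable (s) in
/-- The exponent of `x₀² y_s ⋯ y_{r-1}`, the monomial spanning the socle. -/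
noncomputable def socleExp : Fin r →₀ ℕ :=
  onFinset Finset.univ (fun i => if (i : ℕ) < s then (if i = 0 then 2 else 0) else 1) (by simp)

lemma socleExp_apply (i : Fin r) :
    socleExp s i = if (i : ℕ) < s then (if i = 0 then 2 else 0) else 1 := rfl

lemma socleExp_eq (hs : 0 < s) : socleExp s = ypart s (socleExp s) + single (0 : Fin r) 2 := by
  ext i
  rw [Finsupp.add_apply, ypart_apply, socleExp_apply, single_apply]
  by_cases hi : i = 0
  · subst hi; simp [hs, hs.ne']
  · simp only [hi, Ne.symm hi, if_false]
    split_ifs <;> omega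

lemma xdeg_socleExp (hs : 0 < s) : xdeg s (socleExp s : Fin r →₀ ℕ) = 2 := by
  rw [socleExp_eq hs, xdeg_add, xdeg_ypart, xdeg_single, if_pos (val_zero_lt hs)]

lemma ydeg_socleExp : ydeg s (socleExp s : Fin r →₀ ℕ) = r - s := by
  rw [← sum_ite_val_lt_eq r s]
  exact Finset.sum_congr rfl fun i _ => by rw [socleExp_apply]; split_ifs <;> rfl

lemma degree_socleExp (hs : 0 < s) : (socleExp s : Fin r →₀ ℕ).degree = 2 + (r - s) := by
  rw [degree_eq_xdeg_add_ydeg s, xdeg_socleExp hs, ydeg_socleExp]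

lemma isNormal_socleExp (hs : 0 < s) : IsNormal s (socleExp s : Fin r →₀ ℕ) := by
  refine ⟨⟨fun j hj => ?_, ⟨0, fun i hi hi0 => ?_⟩, (xdeg_socleExp hs).le⟩, ?_⟩
  · rw [socleExp_apply, if_neg (by omega)]
  · rw [socleExp_apply, if_pos hi, if_neg hi0]
  · rw [normalize, if_pos (xdeg_socleExp hs), ← socleExp_eq hs]

lemma not_isStandard_socleExp_add_single (hs : 0 < s) (i : Fin r) :
    ¬ IsStandard s (socleExp s + single i 1) := by
  rintro ⟨hy, -, hx⟩
  by_cases hi : (i : ℕ) < s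
  · rw [xdeg_add, xdeg_socleExp hs, xdeg_single, if_pos hi] at hx
    omega
  · have := hy i (by omega)
    rw [Finsupp.add_apply, socleExp_apply, if_neg hi, single_eq_same] at this
    omega

lemma IsNormal.exists_eq_zero_of_ne_socleExp (hs : 0 < s) {v : Fin r →₀ ℕ} (hv : IsNormal s v)
    (h2 : xdeg s v = 2) (hT : v ≠ socleExp s) : ∃ j : Fin r, s ≤ (j : ℕ) ∧ v j = 0 := by
  by_contra! hy
  refine hT ?_
  rw [hv.eq_of_xdeg_eq_two h2, socleExp_eq hs]
  congr 1
  ext j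
  rw [ypart_apply, ypart_apply, socleExp_apply]
  split_ifs with h1 <;> first | omega | (have := hv.1.1 j h1; have := hy j h1; omega)

lemma exists_isStandard_add_single (hs : 0 < s) {v : Fin r →₀ ℕ} (hv : IsNormal s v)
    (hT : v ≠ socleExp s) : ∃ i : Fin r, IsStandard s (v + single i 1) := by
  obtain h | h | h : xdeg s v = 0 ∨ xdeg s v = 1 ∨ xdeg s v = 2 := by have := hv.1.2.2; omega
  · refine ⟨0, squarefreeY_add_single_of_lt hv.1.1 (val_zero_lt hs) 1,
      atMostOneX_add_single (fun i hi _ => (xdeg_eq_zero_iff s).1 h i hi) 1, ?_⟩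
    rw [xdeg_add, xdeg_single, if_pos (val_zero_lt hs), h]
    omega
  · obtain ⟨m, hm, hvm⟩ := exists_ne_zero_of_xdeg_ne_zero (s := s) (v := v) (by omega)
    refine ⟨m, squarefreeY_add_single_of_lt hv.1.1 hm 1,
      atMostOneX_add_single (fun i hi him => hv.1.2.1.eq_zero_of_ne hm hvm hi him) 1, ?_⟩
    rw [xdeg_add, xdeg_single, if_pos hm, h]
  · obtain ⟨j, hj, hvj⟩ := hv.exists_eq_zero_of_ne_socleExp hs h hT
    refine ⟨j, squarefreeY_add_single_of_eq_zero hv.1.1 hvj, hv.1.2.1.add_single_of_le hj 1, ?_⟩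
    rw [xdeg_add, xdeg_single, if_neg (by omega), h]

lemma eq_of_normalize_add_single_eq (hs : 0 < s) {w w' : Fin r →₀ ℕ} (hw : IsNormal s w)
    (hw' : IsNormal s w') {i : Fin r} (hstd : IsStandard s (w + single i 1))
    (hstd' : IsStandard s (w' + single i 1))
    (h : normalize s (w + single i 1) = normalize s (w' + single i 1)) : w = w' := by
  have hx : xdeg s (w + single i 1) = xdeg s (w' + single i 1) := by
    rw [← xdeg_normalize hs, h, xdeg_normalize hs]
  have hy : ypart s (w + single i 1) = ypart s (w' + single i 1) := by
    rw [← ypart_normalize hs, h, ypart_normalize hs]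
  refine add_right_cancel (b := single i 1) ?_
  by_cases h2 : xdeg s (w + single i 1) = 2
  · -- then both sides are their `y`-part times `xₘ²`, for one and the same `m`
    obtain ⟨m, hm, hwm, hwm'⟩ : ∃ m : Fin r, (m : ℕ) < s ∧
        (w + single i 1 : Fin r →₀ ℕ) m ≠ 0 ∧ (w' + single i 1 : Fin r →₀ ℕ) m ≠ 0 := by
      by_cases hi : (i : ℕ) < s
      · exact ⟨i, hi, by simp, by simp⟩
      · have hx0 : ∀ u : Fin r →₀ ℕ, IsNormal s u → xdeg s (u + single i 1) = 2 →
            (u + single i 1 : Fin r →₀ ℕ) 0 ≠ 0 := fun u hu hu2 => by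
          rw [xdeg_add, xdeg_single, if_neg hi, add_zero] at hu2
          rw [hu.eq_of_xdeg_eq_two hu2]
          simp
        exact ⟨0, val_zero_lt hs, hx0 w hw h2, hx0 w' hw' (hx ▸ h2)⟩
    rw [eq_ypart_add_single hstd.2.1 hm hwm, eq_ypart_add_single hstd'.2.1 hm hwm', hx, hy]
  · rwa [normalize, if_neg h2, normalize, if_neg (hx ▸ h2)] at h

end Socle

section NormalForm

variable (k : Type*) [Field k] {r : ℕ} (s : ℕ) [NeZero r]

open Classical in
noncomputable def monomialNF (v : Fin r →₀ ℕ) : MvPolynomial (Fin r) k :=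
  if IsStandard s v then monomial (normalize s v) 1 else 0

noncomputable def normalForm : MvPolynomial (Fin r) k →ₗ[k] MvPolynomial (Fin r) k :=
  (basisMonomials (Fin r) k).constr k (monomialNF k s)

variable (r) in
def quadGens : Set (MvPolynomial (Fin r) k) :=
  {p | (∃ i j : Fin r, (i : ℕ) < s ∧ (j : ℕ) < s ∧ i ≠ j ∧ p = X i * X j) ∨
       (∃ i : Fin r, (i : ℕ) < s ∧ i ≠ 0 ∧ p = X i ^ 2 - X 0 ^ 2) ∨
       (∃ j : Fin r, s ≤ (j : ℕ) ∧ p = X j ^ 2)}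

variable (r) in
noncomputable def quadIdeal : Ideal (MvPolynomial (Fin r) k) := Ideal.span (quadGens k r s)

variable {k s}

lemma monomialNF_of_isStandard {v : Fin r →₀ ℕ} (h : IsStandard s v) :
    monomialNF k s v = monomial (normalize s v) 1 :=
  if_pos h

lemma monomialNF_of_not_isStandard {v : Fin r →₀ ℕ} (h : ¬ IsStandard s v) :
    monomialNF k s v = 0 :=
  if_neg h

lemma monomialNF_of_isNormal {v : Fin r →₀ ℕ} (h : IsNormal s v) :
    monomialNF k s v = monomial v 1 := by
  rw [monomialNF_of_isStandard h.1, h.2]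

lemma normalForm_monomial (v : Fin r →₀ ℕ) (c : k) :
    normalForm k s (monomial v c) = c • monomialNF k s v := by
  have : monomial v c = c • basisMonomials (Fin r) k v := by
    rw [coe_basisMonomials, smul_monomial, smul_eq_mul, mul_one]
  rw [this, map_smul, normalForm, Module.Basis.constr_basis]

lemma normalForm_apply (p : MvPolynomial (Fin r) k) :
    normalForm k s p = ∑ v ∈ p.support, coeff v p • monomialNF k s v := by
  conv_lhs => rw [← support_sum_monomial_coeff p]
  simp only [map_sum, normalForm_monomial]

lemma normalForm_eq_self {p : MvPolynomial (Fin r) k} (h : ∀ v ∈ p.support, IsNormal s v) :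
    normalForm k s p = p := by
  rw [normalForm_apply]
  conv_rhs => rw [← support_sum_monomial_coeff p]
  exact Finset.sum_congr rfl fun v hv => by
    rw [monomialNF_of_isNormal (h v hv), smul_monomial, smul_eq_mul, mul_one]

lemma isNormal_of_coeff_normalForm_ne_zero (hs : 0 < s) {p : MvPolynomial (Fin r) k}
    {u : Fin r →₀ ℕ} (h : coeff u (normalForm k s p) ≠ 0) : IsNormal s u := by
  rw [normalForm_apply, coeff_sum] at h
  obtain ⟨v, -, hv⟩ := Finset.exists_ne_zero_of_sum_ne_zero h
  by_cases hstd : IsStandard s v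
  · rw [monomialNF_of_isStandard hstd, coeff_smul, coeff_monomial] at hv
    split_ifs at hv with he
    · exact he ▸ isNormal_normalize hs hstd
    · simp at hv
  · simp [monomialNF_of_not_isStandard hstd] at hv

lemma coeff_normalForm_X_mul (q : MvPolynomial (Fin r) k) (i : Fin r) (u : Fin r →₀ ℕ) :
    coeff u (normalForm k s (X i * q)) =
      ∑ w ∈ q.support, coeff w q * coeff u (monomialNF k s (w + single i 1)) := by
  conv_lhs => rw [← support_sum_monomial_coeff q]
  simp only [Finset.mul_sum, X, monomial_mul, one_mul, add_comm (single i 1), map_sum,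
    normalForm_monomial, coeff_sum, coeff_smul, smul_eq_mul]

end NormalForm

section Ideal

variable {k : Type*} [Field k] {r s : ℕ} [NeZero r]

lemma isHomogeneous_of_mem_quadGens {p : MvPolynomial (Fin r) k} (hp : p ∈ quadGens k r s) :
    p.IsHomogeneous 2 := by
  rcases hp with ⟨i, j, -, -, -, rfl⟩ | ⟨i, -, -, rfl⟩ | ⟨j, -, rfl⟩
  · exact (isHomogeneous_X k i).mul (isHomogeneous_X k j)
  · exact ((isHomogeneous_X k i).pow 2).sub ((isHomogeneous_X k 0).pow 2)
  · exact (isHomogeneous_X k j).pow 2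

lemma X_mul_X_mem {i j : Fin r} (hi : (i : ℕ) < s) (hj : (j : ℕ) < s) (hij : i ≠ j) :
    X i * X j ∈ quadIdeal k r s :=
  Ideal.subset_span (Or.inl ⟨i, j, hi, hj, hij, rfl⟩)

lemma X_sq_sub_X_zero_sq_mem {i : Fin r} (hi : (i : ℕ) < s) :
    X i ^ 2 - X 0 ^ 2 ∈ quadIdeal k r s := by
  by_cases hi0 : i = 0
  · rw [hi0, sub_self]
    exact zero_mem _
  · exact Ideal.subset_span (Or.inr (Or.inl ⟨i, hi, hi0, rfl⟩))

lemma X_sq_mem_of_le {j : Fin r} (hj : s ≤ (j : ℕ)) : X j ^ 2 ∈ quadIdeal k r s :=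
  Ideal.subset_span (Or.inr (Or.inr ⟨j, hj, rfl⟩))

lemma X_pow_three_mem (hs : 2 ≤ s) (hsr : s ≤ r) {i : Fin r} (hi : (i : ℕ) < s) :
    X i ^ 3 ∈ quadIdeal k r s := by
  -- `xᵢ³ ≡ xᵢ xⱼ² ≡ 0` for another `x`-variable `xⱼ`, which exists as `2 ≤ s`
  obtain ⟨j, hj, hji⟩ : ∃ j : Fin r, (j : ℕ) < s ∧ j ≠ i := by
    by_cases hi0 : (i : ℕ) = 0
    · exact ⟨⟨1, by omega⟩, by simp; omega, fun e => by simp [← e] at hi0⟩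
    · exact ⟨0, by simp; omega, fun e => hi0 (by simp [← e])⟩
  have : (X i : MvPolynomial (Fin r) k) ^ 3 =
      X i * ((X i ^ 2 - X 0 ^ 2) - (X j ^ 2 - X 0 ^ 2)) + (X i * X j) * X j := by ring
  rw [this]
  exact add_mem (Ideal.mul_mem_left _ _ (sub_mem (X_sq_sub_X_zero_sq_mem hi)
    (X_sq_sub_X_zero_sq_mem hj))) (Ideal.mul_mem_right _ _ (X_mul_X_mem hi hj hji.symm))

lemma monomial_mem_of_le {w v : Fin r →₀ ℕ} (hw : monomial w (1 : k) ∈ quadIdeal k r s)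
    (hle : w ≤ v) : monomial v (1 : k) ∈ quadIdeal k r s :=
  Ideal.mem_of_dvd _ (monomial_dvd_monomial.2 ⟨Or.inr hle, one_dvd _⟩) hw

lemma monomial_mem_of_not_isStandard (hs : 2 ≤ s) (hsr : s ≤ r) {v : Fin r →₀ ℕ}
    (h : ¬ IsStandard s v) : monomial v (1 : k) ∈ quadIdeal k r s := by
  by_cases hx : AtMostOneX s v
  swap
  · simp only [AtMostOneX, not_exists, not_forall] at hx
    obtain ⟨i, hi, hi0, hvi⟩ := hx 0
    obtain ⟨j, hj, hji, hvj⟩ := hx i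
    refine monomial_mem_of_le (w := single i 1 + single j 1)
      (by rw [← one_mul (1 : k), ← monomial_mul]; exact X_mul_X_mem hi hj (Ne.symm hji)) ?_
    refine Finsupp.le_def.2 fun a => ?_
    rw [Finsupp.add_apply, single_apply, single_apply]
    split_ifs <;> subst_vars <;> omega
  by_cases hy : SquarefreeY s v
  swap
  · obtain ⟨j, hj, hvj⟩ : ∃ j : Fin r, s ≤ (j : ℕ) ∧ 1 < v j := by simpa [SquarefreeY] using hy
    exact monomial_mem_of_le (by rw [← X_pow_eq_monomial]; exact X_sq_mem_of_le hj)
      (single_le_iff.2 hvj)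
  have hd : 2 < xdeg s v := by
    by_contra hd
    exact h ⟨hy, hx, by omega⟩
  obtain ⟨m, hm, hvm⟩ := exists_ne_zero_of_xdeg_ne_zero (s := s) (v := v) (by omega)
  exact monomial_mem_of_le (by rw [← X_pow_eq_monomial]; exact X_pow_three_mem hs hsr hm)
    (single_le_iff.2 (by rw [← hx.xdeg_eq_apply hm hvm]; omega))

lemma monomial_sub_monomialNF_mem (hs : 2 ≤ s) (hsr : s ≤ r) (v : Fin r →₀ ℕ) :
    monomial v (1 : k) - monomialNF k s v ∈ quadIdeal k r s := by
  by_cases hstd : IsStandard s v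
  swap
  · rw [monomialNF_of_not_isStandard hstd, sub_zero]
    exact monomial_mem_of_not_isStandard hs hsr hstd
  rw [monomialNF_of_isStandard hstd, normalize]
  split_ifs with h2
  swap
  · rw [sub_self]
    exact zero_mem _
  obtain ⟨m, hm, hvm⟩ := exists_ne_zero_of_xdeg_ne_zero (s := s) (v := v) (by omega)
  have hv := eq_ypart_add_single hstd.2.1 hm hvm
  rw [h2] at hv
  have : monomial v (1 : k) - monomial (ypart s v + single 0 2) 1 =
      monomial (ypart s v) 1 * (X m ^ 2 - X 0 ^ 2) := by
    rw [mul_sub, X_pow_eq_monomial, X_pow_eq_monomial, monomial_mul, monomial_mul, one_mul, ← hv]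
  rw [this]
  exact Ideal.mul_mem_left _ _ (X_sq_sub_X_zero_sq_mem hm)

lemma sub_normalForm_mem (hs : 2 ≤ s) (hsr : s ≤ r) (p : MvPolynomial (Fin r) k) :
    p - normalForm k s p ∈ quadIdeal k r s := by
  have : p - normalForm k s p =
      ∑ v ∈ p.support, (monomial v (coeff v p) - coeff v p • monomialNF k s v) := by
    rw [Finset.sum_sub_distrib, support_sum_monomial_coeff, normalForm_apply]
  rw [this]
  refine sum_mem fun v _ => ?_
  rw [smul_eq_C_mul, ← mul_one (coeff v p), ← C_mul_monomial, mul_one, ← mul_sub]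
  exact Ideal.mul_mem_left _ _ (monomial_sub_monomialNF_mem hs hsr v)

lemma monomialNF_add_single_two (hs : 0 < s) (w : Fin r →₀ ℕ) {i : Fin r} (hi : (i : ℕ) < s) :
    monomialNF k s (w + single i 2) = monomialNF k s (w + single 0 2) := by
  by_cases h : SquarefreeY s w ∧ xdeg s w = 0
  · have hnorm : ∀ j : Fin r, (j : ℕ) < s →
        normalize s (w + single j 2) = ypart s w + single 0 2 := fun j hj => by
      rw [normalize, if_pos (by rw [xdeg_add, xdeg_single, if_pos hj, h.2]), ypart_add,
        ypart_single_of_lt s hj, add_zero]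
    rw [monomialNF_of_isStandard ((isStandard_add_single_two_iff hi).2 h),
      monomialNF_of_isStandard ((isStandard_add_single_two_iff (val_zero_lt hs)).2 h),
      hnorm i hi, hnorm 0 (val_zero_lt hs)]
  · rw [monomialNF_of_not_isStandard (mt (isStandard_add_single_two_iff hi).1 h),
      monomialNF_of_not_isStandard (mt (isStandard_add_single_two_iff (val_zero_lt hs)).1 h)]

lemma normalForm_monomial_mul_eq_zero (hs : 0 < s) (w : Fin r →₀ ℕ) {g : MvPolynomial (Fin r) k}
    (hg : g ∈ quadGens k r s) : normalForm k s (monomial w 1 * g) = 0 := by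
  rcases hg with ⟨i, j, hi, hj, hij, rfl⟩ | ⟨i, hi, -, rfl⟩ | ⟨j, hj, rfl⟩
  · rw [X, X, ← mul_assoc, monomial_mul, monomial_mul, one_mul, one_mul, normalForm_monomial,
      monomialNF_of_not_isStandard, smul_zero]
    rintro ⟨-, hx, -⟩
    obtain ⟨m, hm⟩ := hx
    by_cases him : i = m
    · have := hm j hj (fun e => hij (him.trans e.symm))
      simp [hij] at this
    · have := hm i hi him
      simp [single_apply] at this
  · rw [mul_sub, X_pow_eq_monomial, X_pow_eq_monomial, monomial_mul, monomial_mul, one_mul,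
      map_sub, normalForm_monomial, normalForm_monomial, monomialNF_add_single_two hs w hi,
      sub_self]
  · rw [X_pow_eq_monomial, monomial_mul, one_mul, normalForm_monomial,
      monomialNF_of_not_isStandard, smul_zero]
    rintro ⟨hy, -, -⟩
    have := hy j hj
    simp at this

lemma normalForm_mul_eq_zero_of_mem (hs : 0 < s) {g : MvPolynomial (Fin r) k}
    (hg : g ∈ quadIdeal k r s) (p : MvPolynomial (Fin r) k) : normalForm k s (p * g) = 0 := by
  induction hg using Submodule.span_induction generalizing p with
  | mem g hg =>
    induction p using MvPolynomial.induction_on' with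
    | monomial u c =>
      have : monomial u c * g = c • (monomial u 1 * g) := by
        rw [← smul_mul_assoc, smul_monomial, smul_eq_mul, mul_one]
      rw [this, map_smul, normalForm_monomial_mul_eq_zero hs u hg, smul_zero]
    | add p q hp hq => rw [add_mul, map_add, hp, hq, add_zero]
  | zero => rw [mul_zero, map_zero]
  | add a b _ _ ha hb => rw [mul_add, map_add, ha, hb, add_zero]
  | smul a b _ hb => rw [smul_eq_mul, ← mul_assoc, hb]

lemma mem_quadIdeal_iff (hs : 2 ≤ s) (hsr : s ≤ r) {p : MvPolynomial (Fin r) k} :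
    p ∈ quadIdeal k r s ↔ normalForm k s p = 0 :=
  ⟨fun h => by simpa using normalForm_mul_eq_zero_of_mem (by omega) h 1,
    fun h => by simpa [h] using sub_normalForm_mem hs hsr p⟩

end Ideal

section Quotient

variable {k : Type*} [Field k] {r s : ℕ} [NeZero r]

attribute [local instance] MvPolynomial.gradedAlgebra

lemma isHomog_quadIdeal : IsHomog k (Fin r) (quadIdeal k r s) := fun _ hp d =>
  homogeneousComponent_mem_of_mem
    (Ideal.homogeneous_span _ _ fun _ hg => ⟨2, isHomogeneous_of_mem_quadGens hg⟩) hp d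

lemma genByQuadrics_quadIdeal : GenByQuadrics k (Fin r) (quadIdeal k r s) :=
  ⟨quadGens k r s, fun _ hp => isHomogeneous_of_mem_quadGens hp, rfl⟩

lemma noLinearForms_quadIdeal (hs : 0 < s) : NoLinearForms k (Fin r) (quadIdeal k r s) :=
  fun p hp hmem => by
    rw [← normalForm_eq_self (s := s) fun v hv =>
      isNormal_of_degree_le_one (hp.degree_eq_sum_deg_support hv).ge]
    simpa using normalForm_mul_eq_zero_of_mem hs hmem 1

lemma quotPiece_eq_bot (hs : 2 ≤ s) (hsr : s ≤ r) {d : ℕ} (hd : 2 + (r - s) < d) :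
    quotPiece k (Fin r) (quadIdeal k r s) d = ⊥ := by
  refine eq_bot_iff.2 ?_
  rintro _ ⟨p, hp, rfl⟩
  rw [AlgHom.toLinearMap_apply, Ideal.Quotient.mkₐ_eq_mk, Submodule.mem_bot,
    Ideal.Quotient.eq_zero_iff_mem, mem_quadIdeal_iff hs hsr, normalForm_apply]
  refine Finset.sum_eq_zero fun v hv => ?_
  rw [monomialNF_of_not_isStandard fun hstd => ?_, smul_zero]
  have := degree_le_of_isStandard hstd
  have := (hp.degree_eq_sum_deg_support hv).symm
  rw [← degree_apply] at this
  omega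

lemma hilb_eq_zero_of_lt (hs : 2 ≤ s) (hsr : s ≤ r) {d : ℕ} (hd : 2 + (r - s) < d) :
    hilb k (Fin r) (quadIdeal k r s) d = 0 := by
  rw [hilb, quotPiece_eq_bot hs hsr hd, finrank_bot]

instance (I : Ideal (MvPolynomial (Fin r) k)) (d : ℕ) :
    FiniteDimensional k (quotPiece k (Fin r) I d) :=
  have : FiniteDimensional k (homogeneousSubmodule (Fin r) k d) :=
    Module.Finite.iff_fg.2 (homogeneousSubmodule_fg _ _ d)
  Module.Finite.map _ _

lemma mk_socleExp_ne_zero (hs : 2 ≤ s) (hsr : s ≤ r) :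
    Ideal.Quotient.mk (quadIdeal k r s) (monomial (socleExp s) 1) ≠ 0 := by
  rw [Ne, Ideal.Quotient.eq_zero_iff_mem, mem_quadIdeal_iff hs hsr, normalForm_monomial,
    monomialNF_of_isNormal (isNormal_socleExp (by omega)), one_smul, monomial_eq_zero]
  exact one_ne_zero

lemma hilb_ne_zero (hs : 2 ≤ s) (hsr : s ≤ r) :
    hilb k (Fin r) (quadIdeal k r s) (2 + (r - s)) ≠ 0 := by
  intro h
  have hmem : Ideal.Quotient.mk (quadIdeal k r s) (monomial (socleExp s) 1) ∈
      quotPiece k (Fin r) (quadIdeal k r s) (2 + (r - s)) :=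
    ⟨_, isHomogeneous_monomial _ (degree_socleExp (by omega)), rfl⟩
  rw [Submodule.finrank_eq_zero.1 h, Submodule.mem_bot] at hmem
  exact mk_socleExp_ne_zero hs hsr hmem

lemma X_mul_monomial_socleExp_mem (hs : 2 ≤ s) (hsr : s ≤ r) (i : Fin r) :
    X i * monomial (socleExp s) 1 ∈ quadIdeal k r s := by
  rw [mem_quadIdeal_iff hs hsr, X, monomial_mul, one_mul, add_comm, normalForm_monomial,
    monomialNF_of_not_isStandard (not_isStandard_socleExp_add_single (by omega) i), smul_zero]

lemma coeff_eq_zero_of_isStandard_add_single (hs : 0 < s) {q : MvPolynomial (Fin r) k}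
    (hq : ∀ w ∈ q.support, IsNormal s w) {i : Fin r} (hXq : normalForm k s (X i * q) = 0)
    {v : Fin r →₀ ℕ} (hv : IsNormal s v) (hstd : IsStandard s (v + single i 1)) :
    coeff v q = 0 := by
  have := congrArg (coeff (normalize s (v + single i 1))) hXq
  rw [coeff_normalForm_X_mul, coeff_zero, Finset.sum_eq_single v] at this
  · simpa [monomialNF_of_isStandard hstd] using this
  · intro w hw hwv
    by_cases hwstd : IsStandard s (w + single i 1)
    · rw [monomialNF_of_isStandard hwstd, coeff_monomial,
        if_neg fun h => hwv (eq_of_normalize_add_single_eq hs (hq w hw) hv hwstd hstd h), mul_zero]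
    · rw [monomialNF_of_not_isStandard hwstd, coeff_zero, mul_zero]
  · intro hv
    rw [MvPolynomial.notMem_support_iff.1 hv, zero_mul]

lemma socle_eq_span (hs : 2 ≤ s) (hsr : s ≤ r) :
    socle k (Fin r) (quadIdeal k r s) =
      Submodule.span k {Ideal.Quotient.mk (quadIdeal k r s) (monomial (socleExp s) 1)} := by
  refine le_antisymm (fun a ha => ?_) ((Submodule.span_singleton_le_iff_mem _ _).2 ?_)
  · obtain ⟨p, rfl⟩ := Ideal.Quotient.mk_surjective a
    set q := normalForm k s p
    have hmk : Ideal.Quotient.mk (quadIdeal k r s) q = Ideal.Quotient.mk _ p :=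
      Ideal.Quotient.eq.2 (by simpa using neg_mem (sub_normalForm_mem hs hsr p))
    have hq : ∀ w ∈ q.support, IsNormal s w := fun w hw =>
      isNormal_of_coeff_normalForm_ne_zero (by omega) (MvPolynomial.mem_support_iff.1 hw)
    have hXq : ∀ i, normalForm k s (X i * q) = 0 := fun i => by
      rw [← mem_quadIdeal_iff hs hsr, ← Ideal.Quotient.eq_zero_iff_mem, map_mul, hmk]
      exact (Submodule.mem_iInf _).1 ha i
    have hq_eq : q = coeff (socleExp s) q • monomial (socleExp s) 1 := by
      ext u
      rw [coeff_smul, coeff_monomial, smul_eq_mul]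
      split_ifs with hu
      · rw [hu, mul_one]
      rw [mul_zero]
      by_contra hne
      have hu_normal := hq u (MvPolynomial.mem_support_iff.2 hne)
      obtain ⟨i, hi⟩ := exists_isStandard_add_single (by omega) hu_normal (Ne.symm hu)
      exact hne (coeff_eq_zero_of_isStandard_add_single (by omega) hq (hXq i) hu_normal hi)
    rw [← hmk, hq_eq, ← Ideal.Quotient.mkₐ_eq_mk k, map_smul]
    exact Submodule.smul_mem _ _ (Submodule.mem_span_singleton_self _)
  · refine (Submodule.mem_iInf _).2 fun i => ?_
    rw [LinearMap.mem_ker, LinearMap.mulLeft_apply, ← map_mul, Ideal.Quotient.eq_zero_iff_mem]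
    exact X_mul_monomial_socleExp_mem hs hsr i

lemma gorensteinHF_quadIdeal (hs : 2 ≤ s) (hsr : s ≤ r) :
    GorensteinHF k (Fin r) (quadIdeal k r s) := by
  rw [GorensteinHF, socle_eq_span hs hsr]
  exact finrank_span_singleton (mk_socleExp_ne_zero hs hsr)

end Quotient

end GorensteinQuadrics

theorem stmt_8_general (k : Type*) [Field k] (r e : ℕ) (he2 : 2 ≤ e) (her : e ≤ r) :
    ∃ I : Ideal (MvPolynomial (Fin r) k),
      AGQuad k (Fin r) I ∧ IsSocleDegree k (Fin r) I e := by
  open GorensteinQuadrics in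
  have : NeZero r := ⟨by omega⟩
  obtain ⟨s, hs, hsr, rfl⟩ : ∃ s, 2 ≤ s ∧ s ≤ r ∧ e = 2 + (r - s) :=
    ⟨r - e + 2, by omega, by omega, by omega⟩
  refine ⟨quadIdeal k r s, ⟨isHomog_quadIdeal, noLinearForms_quadIdeal (by omega),
    genByQuadrics_quadIdeal, ⟨3 + (r - s), fun d hd => hilb_eq_zero_of_lt hs hsr (by omega)⟩,
    gorensteinHF_quadIdeal hs hsr⟩, hilb_ne_zero hs hsr, fun d hd => hilb_eq_zero_of_lt hs hsr hd⟩

/-- For every `r ≥ 2` and every `e` with `2 ≤ e ≤ r`, there exists an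
artinian Gorenstein algebra of codimension `r` presented by quadrics with socle
degree `e`. -/
theorem stmt_8 (k : Type*) [Field k] (r e : ℕ) (hr : 2 ≤ r) (he2 : 2 ≤ e) (her : e ≤ r) :
    ∃ I : Ideal (MvPolynomial (Fin r) k),
      AGQuad k (Fin r) I ∧ IsSocleDegree k (Fin r) I e :=
  stmt_8_general k r e he2 her
end

section
/- Let R/I be an artinian Gorenstein algebra for which multiplication by a general linear form L from degree 1 to degree 2 is injective, with h_1 = h_2 = r and socle degree e ≥ 4. Then h_i = r for all i = 1,...,e-1. -/
open MvPolynomial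

/-! Write `A = R/I` and `A_i` for its graded pieces. Multiplication by `L` is injective from
`A_1` to `A_2`, which have the same dimension, so `A_2 = L·A_1`; since `A` is generated in
degree one this propagates to `A_{i+1} = L·A_i` for all `i ≥ 1`, and the Hilbert function is
non-increasing from degree one on. On the other hand the socle of the Gorenstein algebra `A` is
`A_e ≅ k`, which makes the multiplication pairing `A_i × A_{e-i} → A_e` nondegenerate in the
first argument, so `h_1 ≤ h_{e-1}`. Hence `r = h_1 ≤ h_{e-1} ≤ h_i ≤ h_1 = r` for `1 ≤ i ≤ e-1`.
-/

namespace MvPolynomial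

lemma exists_monomial_eq_X_mul {R σ : Type*} [CommSemiring R] {m : σ →₀ ℕ} {d : ℕ}
    (hm : m.degree = d + 1) (c : R) :
    ∃ l, ∃ q : MvPolynomial σ R, q.IsHomogeneous d ∧ monomial m c = X l * q := by
  obtain ⟨l, hl⟩ : ∃ l, m l ≠ 0 := by
    by_contra! h
    simp [show m = 0 from Finsupp.ext h] at hm
  have hsplit : Finsupp.single l 1 + (m - Finsupp.single l 1) = m :=
    add_tsub_cancel_of_le (Finsupp.single_le_iff.mpr (Nat.one_le_iff_ne_zero.mpr hl))
  refine ⟨l, monomial (m - Finsupp.single l 1) c, isHomogeneous_monomial _ ?_, ?_⟩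
  · have := congrArg Finsupp.degree hsplit
    rw [map_add, Finsupp.degree_single, hm] at this
    omega
  · rw [← pow_one (X l), ← monomial_single_add, hsplit]

end MvPolynomial

section GradedPieces

variable {k : Type*} [Field k] {σ : Type*} {I : Ideal (MvPolynomial σ k)}

lemma mem_quotPiece_iff {d : ℕ} {x : MvPolynomial σ k ⧸ I} :
    x ∈ quotPiece k σ I d ↔
      ∃ p : MvPolynomial σ k, p.IsHomogeneous d ∧ Ideal.Quotient.mk I p = x := by
  simp only [quotPiece, Submodule.mem_map, AlgHom.toLinearMap_apply, Ideal.Quotient.mkₐ_eq_mk,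
    mem_homogeneousSubmodule]

lemma mk_mem_quotPiece {d : ℕ} {p : MvPolynomial σ k} (hp : p.IsHomogeneous d) :
    Ideal.Quotient.mk I p ∈ quotPiece k σ I d :=
  mem_quotPiece_iff.mpr ⟨p, hp, rfl⟩

lemma mk_X_mem_quotPiece_one (l : σ) : Ideal.Quotient.mk I (X l) ∈ quotPiece k σ I 1 :=
  mk_mem_quotPiece (isHomogeneous_X k l)

lemma mul_mem_quotPiece {i j : ℕ} {x y : MvPolynomial σ k ⧸ I}
    (hx : x ∈ quotPiece k σ I i) (hy : y ∈ quotPiece k σ I j) :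
    x * y ∈ quotPiece k σ I (i + j) := by
  obtain ⟨p, hp, rfl⟩ := mem_quotPiece_iff.mp hx
  obtain ⟨q, hq, rfl⟩ := mem_quotPiece_iff.mp hy
  exact mk_mem_quotPiece (hp.mul hq)

lemma mk_X_mul_mem_quotPiece {d : ℕ} (l : σ) {x : MvPolynomial σ k ⧸ I}
    (hx : x ∈ quotPiece k σ I d) : Ideal.Quotient.mk I (X l) * x ∈ quotPiece k σ I (d + 1) :=
  add_comm 1 d ▸ mul_mem_quotPiece (mk_X_mem_quotPiece_one l) hx

lemma disjoint_quotPiece (hhom : IsHomog k σ I) {d d' : ℕ} (hne : d ≠ d') :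
    Disjoint (quotPiece k σ I d) (quotPiece k σ I d') := by
  rw [Submodule.disjoint_def]
  intro x hx hx'
  obtain ⟨p, hp, rfl⟩ := mem_quotPiece_iff.mp hx
  obtain ⟨q, hq, hqp⟩ := mem_quotPiece_iff.mp hx'
  have hcomp := hhom _ ((Ideal.Quotient.mk_eq_mk_iff_sub_mem q p).mp hqp) d
  rw [map_sub, homogeneousComponent_of_mem ((mem_homogeneousSubmodule _ _).mpr hq),
    homogeneousComponent_of_mem ((mem_homogeneousSubmodule _ _).mpr hp), if_neg hne,
    if_pos rfl, zero_sub, neg_mem_iff] at hcomp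
  exact Ideal.Quotient.eq_zero_iff_mem.mpr hcomp

lemma quotPiece_succ_le_of_forall_mk_X_mul {d : ℕ} {W : Submodule k (MvPolynomial σ k ⧸ I)}
    (hW : ∀ l, ∀ y ∈ quotPiece k σ I d, Ideal.Quotient.mk I (X l) * y ∈ W) :
    quotPiece k σ I (d + 1) ≤ W := by
  intro x hx
  obtain ⟨p, hp, rfl⟩ := mem_quotPiece_iff.mp hx
  rw [p.as_sum, map_sum]
  refine Submodule.sum_mem _ fun m hm => ?_
  have hdeg : m.degree = d + 1 := by
    by_contra h
    exact mem_support_iff.mp hm (hp.coeff_eq_zero h)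
  obtain ⟨l, q, hq, hmq⟩ := exists_monomial_eq_X_mul hdeg (coeff m p)
  rw [hmq, map_mul]
  exact hW l _ (mk_mem_quotPiece hq)

instance [Finite σ] (d : ℕ) : FiniteDimensional k (quotPiece k σ I d) :=
  have : FiniteDimensional k (homogeneousSubmodule σ k d) :=
    Submodule.finiteDimensional_of_le fun _ hp =>
      (mem_restrictTotalDegree _ _ _).mpr ((mem_homogeneousSubmodule _ _).mp hp).totalDegree_le
  Module.Finite.map _ _

lemma quotPiece_eq_bot [Finite σ] {d : ℕ} (h : hilb k σ I d = 0) : quotPiece k σ I d = ⊥ :=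
  Submodule.finrank_eq_zero.mp h

end GradedPieces

section MulByLinearForm

variable {k : Type*} [Field k] {σ : Type*} {I : Ideal (MvPolynomial σ k)}

lemma quotPiece_succ_eq_map_mulLeft [Finite σ] {a : MvPolynomial σ k ⧸ I}
    (ha : a ∈ quotPiece k σ I 1) {d : ℕ}
    (hinj : ∀ x ∈ quotPiece k σ I d, a * x = 0 → x = 0)
    (hdim : hilb k σ I d = hilb k σ I (d + 1)) :
    quotPiece k σ I (d + 1) = (quotPiece k σ I d).map (LinearMap.mulLeft k a) := by
  have hmaps : (quotPiece k σ I d).map (LinearMap.mulLeft k a) ≤ quotPiece k σ I (d + 1) := by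
    rintro _ ⟨x, hx, rfl⟩
    exact add_comm 1 d ▸ mul_mem_quotPiece ha hx
  have hinj' : Function.Injective ((LinearMap.mulLeft k a).domRestrict (quotPiece k σ I d)) :=
    LinearMap.ker_eq_bot.mp <| LinearMap.ker_eq_bot'.mpr fun x hx => Subtype.ext (hinj x x.2 hx)
  refine (Submodule.eq_of_le_of_finrank_eq hmaps ?_).symm
  rw [← LinearMap.range_domRestrict, LinearMap.finrank_range_of_inj hinj']
  exact hdim

lemma quotPiece_succ_le_map_mulLeft {a : MvPolynomial σ k ⧸ I} {d : ℕ}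
    (hd : quotPiece k σ I (d + 1) ≤ (quotPiece k σ I d).map (LinearMap.mulLeft k a))
    {n : ℕ} (hn : d ≤ n) :
    quotPiece k σ I (n + 1) ≤ (quotPiece k σ I n).map (LinearMap.mulLeft k a) := by
  induction n, hn using Nat.le_induction with
  | base => exact hd
  | succ n _ ih =>
    refine quotPiece_succ_le_of_forall_mk_X_mul fun l y hy => ?_
    obtain ⟨z, hz, rfl⟩ := ih hy
    refine ⟨Ideal.Quotient.mk I (X l) * z, mk_X_mul_mem_quotPiece l hz, ?_⟩
    simp only [LinearMap.mulLeft_apply]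
    ring

lemma hilb_antitoneOn [Finite σ] {a : MvPolynomial σ k ⧸ I} {d : ℕ}
    (hd : quotPiece k σ I (d + 1) ≤ (quotPiece k σ I d).map (LinearMap.mulLeft k a)) :
    AntitoneOn (hilb k σ I) (Set.Ici d) :=
  antitoneOn_nat_Ici_of_succ_le fun _ hn =>
    (Submodule.finrank_mono (quotPiece_succ_le_map_mulLeft hd hn)).trans
      (Submodule.finrank_map_le _ _)

end MulByLinearForm

section GorensteinDuality

variable {k : Type*} [Field k] {σ : Type*} {I : Ideal (MvPolynomial σ k)}

lemma mem_socle_iff {x : MvPolynomial σ k ⧸ I} :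
    x ∈ socle k σ I ↔ ∀ l, Ideal.Quotient.mk I (X l) * x = 0 := by
  simp only [socle, Submodule.mem_iInf, LinearMap.mem_ker, LinearMap.mulLeft_apply]

variable [Finite σ] {e : ℕ}

lemma socle_eq_quotPiece (hgor : GorensteinHF k σ I) (he : IsSocleDegree k σ I e) :
    socle k σ I = quotPiece k σ I e := by
  have : FiniteDimensional k (socle k σ I) := Module.finite_of_finrank_eq_succ hgor
  refine (Submodule.eq_of_le_of_finrank_le (fun x hx => mem_socle_iff.mpr fun l => ?_) ?_).symm
  · have hXx := mk_X_mul_mem_quotPiece l hx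
    rwa [quotPiece_eq_bot (he.2 _ (Nat.lt_succ_self e)), Submodule.mem_bot] at hXx
  · rw [hgor]
    exact Nat.one_le_iff_ne_zero.mpr he.1

lemma hilb_eq_one_of_isSocleDegree (hgor : GorensteinHF k σ I) (he : IsSocleDegree k σ I e) :
    hilb k σ I e = 1 := by
  rw [hilb, ← socle_eq_quotPiece hgor he]
  exact hgor

/- Downward induction on the complementary degree `m`: a nonzero form of degree `n < e` lies
outside the socle `A_e`, so some variable does not kill it. -/
lemma exists_mul_ne_zero_of_mem_quotPiece (hhom : IsHomog k σ I) (hgor : GorensteinHF k σ I)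
    (he : IsSocleDegree k σ I e) {n m : ℕ} (hnm : n + m = e) {x : MvPolynomial σ k ⧸ I}
    (hx : x ∈ quotPiece k σ I n) (hx0 : x ≠ 0) : ∃ c ∈ quotPiece k σ I m, x * c ≠ 0 := by
  induction m generalizing n x with
  | zero =>
    refine ⟨1, ?_, by rwa [mul_one]⟩
    exact map_one (Ideal.Quotient.mk I) ▸ mk_mem_quotPiece (isHomogeneous_one σ k)
  | succ m ih =>
    obtain ⟨l, hl⟩ : ∃ l, Ideal.Quotient.mk I (X l) * x ≠ 0 := by
      by_contra! h
      rw [← mem_socle_iff, socle_eq_quotPiece hgor he] at h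
      exact hx0 (Submodule.disjoint_def.mp (disjoint_quotPiece hhom (by omega)) x hx h)
    obtain ⟨c, hc, hxc⟩ := ih (by omega) (mk_X_mul_mem_quotPiece l hx) hl
    refine ⟨Ideal.Quotient.mk I (X l) * c, add_comm 1 m ▸ mk_X_mul_mem_quotPiece l hc, ?_⟩
    rwa [mul_left_comm, ← mul_assoc]

lemma hilb_le_hilb_sub (hhom : IsHomog k σ I) (hgor : GorensteinHF k σ I)
    (he : IsSocleDegree k σ I e) {i : ℕ} (hi : i ≤ e) :
    hilb k σ I i ≤ hilb k σ I (e - i) := by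
  let mult := (LinearMap.mul k (MvPolynomial σ k ⧸ I)).domRestrict₁₂
    (quotPiece k σ I i) (quotPiece k σ I (e - i))
  have hmul : ∀ a b, mult a b ∈ LinearMap.range (quotPiece k σ I e).subtype := fun a b => by
    have hab := mul_mem_quotPiece a.2 b.2
    rwa [Nat.add_sub_cancel' hi, ← Submodule.range_subtype (quotPiece k σ I e)] at hab
  let pairing := mult.codRestrict₂ _ (quotPiece k σ I e).injective_subtype hmul
  have hinj : Function.Injective pairing := by
    refine (injective_iff_map_eq_zero pairing).mpr fun a ha => ?_
    by_contra ha0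
    obtain ⟨c, hc, hac⟩ := exists_mul_ne_zero_of_mem_quotPiece hhom hgor he
      (Nat.add_sub_cancel' hi) a.2 (fun h => ha0 (Subtype.ext h))
    have hpair := LinearMap.codRestrict₂_apply mult _ (quotPiece k σ I e).injective_subtype hmul
      a ⟨c, hc⟩
    simp only [pairing, ha, LinearMap.zero_apply, map_zero] at hpair
    exact hac hpair.symm
  have : Module.Finite k (quotPiece k σ I (e - i) →ₗ[k] quotPiece k σ I e) :=
    Module.Finite.linearMap k k _ _
  calc hilb k σ I i ≤ Module.finrank k (quotPiece k σ I (e - i) →ₗ[k] quotPiece k σ I e) :=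
        LinearMap.finrank_le_finrank_of_injective hinj
    _ = hilb k σ I (e - i) := by
      rw [Module.finrank_linearMap]
      change hilb k σ I (e - i) * hilb k σ I e = _
      rw [hilb_eq_one_of_isSocleDegree hgor he, mul_one]

end GorensteinDuality

theorem stmt_18_general (k : Type*) [Field k] (r e : ℕ)
    (I : Ideal (MvPolynomial (Fin r) k))
    (hhom : IsHomog k (Fin r) I)
    (hgor : GorensteinHF k (Fin r) I)
    (he : IsSocleDegree k (Fin r) I e)
    (h1 : hilb k (Fin r) I 1 = r) (h2 : hilb k (Fin r) I 2 = r)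
    (hinj : ∃ L : MvPolynomial (Fin r) k, L.IsHomogeneous 1 ∧ L ≠ 0 ∧
      ∀ x ∈ quotPiece k (Fin r) I 1, Ideal.Quotient.mk I L * x = 0 → x = 0) :
    ∀ i : ℕ, 1 ≤ i → i ≤ e - 1 → hilb k (Fin r) I i = r := by
  obtain ⟨L, hL1, -, hLinj⟩ := hinj
  have hanti : AntitoneOn (hilb k (Fin r) I) (Set.Ici 1) :=
    hilb_antitoneOn (quotPiece_succ_eq_map_mulLeft (mk_mem_quotPiece hL1) hLinj
      (h1.trans h2.symm)).le
  intro i hi hie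
  have hdual : hilb k (Fin r) I 1 ≤ hilb k (Fin r) I (e - 1) :=
    hilb_le_hilb_sub hhom hgor he (by omega)
  have hdecr₁ : hilb k (Fin r) I i ≤ hilb k (Fin r) I 1 :=
    hanti Set.self_mem_Ici hi hi
  have hdecr₂ : hilb k (Fin r) I (e - 1) ≤ hilb k (Fin r) I i :=
    hanti hi (show 1 ≤ e - 1 by omega) hie
  omega

/-- Let `R/I` be an artinian Gorenstein algebra for which multiplication by
a (general) linear form from degree 1 to degree 2 is injective, with `h_1 = h_2 = r` and
socle degree `e ≥ 4`. Then `h_i = r` for all `i = 1, ..., e-1`. -/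
theorem stmt_18 (k : Type*) [Field k] (r e : ℕ) (he4 : 4 ≤ e)
    (I : Ideal (MvPolynomial (Fin r) k))
    (hhom : IsHomog k (Fin r) I)
    (hart : ArtinianHF k (Fin r) I) (hgor : GorensteinHF k (Fin r) I)
    (he : IsSocleDegree k (Fin r) I e)
    (h1 : hilb k (Fin r) I 1 = r) (h2 : hilb k (Fin r) I 2 = r)
    (hinj : ∃ L : MvPolynomial (Fin r) k, L.IsHomogeneous 1 ∧ L ≠ 0 ∧
      ∀ x ∈ quotPiece k (Fin r) I 1, Ideal.Quotient.mk I L * x = 0 → x = 0) :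
    ∀ i : ℕ, 1 ≤ i → i ≤ e - 1 → hilb k (Fin r) I i = r :=
  stmt_18_general k r e I hhom hgor he h1 h2 hinj
end

section
/- For the complete intersection I = (x_1^2,...,x_r^2) in characteristic zero with r ≥ 7, and L = x_1 + x_2 + x_3 + x_4 + x_5: (i) the multiplication ×L : (R/I)_2 → (R/I)_3 is injective; (ii) the multiplication ×L : (R/I)_3 → (R/I)_4 is not injective (e.g., x_1x_2x_4 - x_2x_3x_4 - x_1x_4x_5 + x_3x_4x_5 lies in the kernel). -/
open MvPolynomial

set_option maxHeartbeats 2000000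

/-- For `I = (x_1^2,...,x_r^2)` in characteristic zero with `r ≥ 7` and
`L = x_1 + x_2 + x_3 + x_4 + x_5`: (i) `×L : (R/I)_2 → (R/I)_3` is injective;
(ii) `×L : (R/I)_3 → (R/I)_4` is not injective, the element
`x_1x_2x_4 - x_2x_3x_4 - x_1x_4x_5 + x_3x_4x_5` being a nonzero element of the kernel. -/
theorem stmt_19 (k : Type*) [Field k] [CharZero k] (r : ℕ) (hr : 7 ≤ r)
    (I : Ideal (MvPolynomial (Fin r) k))
    (hI : I = Ideal.span (Set.range fun i : Fin r => MvPolynomial.X i ^ 2))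
    (L : MvPolynomial (Fin r) k)
    (hL : L = MvPolynomial.X (⟨0, by omega⟩ : Fin r) + MvPolynomial.X ⟨1, by omega⟩ +
      MvPolynomial.X ⟨2, by omega⟩ + MvPolynomial.X ⟨3, by omega⟩ +
      MvPolynomial.X ⟨4, by omega⟩)
    (z : MvPolynomial (Fin r) k)
    (hz : z =
      MvPolynomial.X (⟨0, by omega⟩ : Fin r) * MvPolynomial.X ⟨1, by omega⟩ *
          MvPolynomial.X ⟨3, by omega⟩ -
        MvPolynomial.X (⟨1, by omega⟩ : Fin r) * MvPolynomial.X ⟨2, by omega⟩ *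
          MvPolynomial.X ⟨3, by omega⟩ -
        MvPolynomial.X (⟨0, by omega⟩ : Fin r) * MvPolynomial.X ⟨3, by omega⟩ *
          MvPolynomial.X ⟨4, by omega⟩ +
        MvPolynomial.X (⟨2, by omega⟩ : Fin r) * MvPolynomial.X ⟨3, by omega⟩ *
          MvPolynomial.X ⟨4, by omega⟩) :
    (∀ x ∈ quotPiece k (Fin r) I 2, Ideal.Quotient.mk I L * x = 0 → x = 0) ∧
    Ideal.Quotient.mk I z ≠ 0 ∧
    Ideal.Quotient.mk I L * Ideal.Quotient.mk I z = 0 := by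
    classical
  have memI : ∀ q : MvPolynomial (Fin r) k, q ∈ I ↔ ∀ m ∈ q.support, ∃ i, 2 ≤ m i := by
    intro q
    rw [hI]
    have himg : (Set.range fun i : Fin r => (X i : MvPolynomial (Fin r) k) ^ 2)
        = (fun s => monomial s (1:k)) '' (Set.range fun i : Fin r => Finsupp.single i 2) := by
      rw [← Set.range_comp]
      apply congrArg
      funext i
      simp [X_pow_eq_monomial, Function.comp]
    rw [himg, mem_ideal_span_monomial_image]
    constructor <;> intro h m hm
    · obtain ⟨si, ⟨i, rfl⟩, hle⟩ := h m hm
      exact ⟨i, Finsupp.single_le_iff.mp hle⟩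
    · obtain ⟨i, hi⟩ := h m hm
      exact ⟨Finsupp.single i 2, ⟨i, rfl⟩, Finsupp.single_le_iff.mpr hi⟩
  have vanish : ∀ q : MvPolynomial (Fin r) k, q ∈ I →
      ∀ m : Fin r →₀ ℕ, (∀ i, m i ≤ 1) → coeff m q = 0 := by
    intro q hq m hm
    by_contra hne
    obtain ⟨i, hi⟩ := (memI q).mp hq m (mem_support_iff.mpr hne)
    exact absurd (hm i) (by omega)
  have hXmem : ∀ i : Fin r, (X i : MvPolynomial (Fin r) k) ^ 2 ∈ I := by
    intro i
    rw [hI]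
    exact Ideal.subset_span ⟨i, rfl⟩
  have hLzI : L * z ∈ I := by
    have hfac : L * z =
        X (⟨3, by omega⟩ : Fin r) * (X ⟨1, by omega⟩ - X ⟨4, by omega⟩) *
          ((X ⟨0, by omega⟩ : MvPolynomial (Fin r) k) ^ 2 - X ⟨2, by omega⟩ ^ 2)
        + X (⟨3, by omega⟩ : Fin r) * (X ⟨0, by omega⟩ - X ⟨2, by omega⟩) *
          ((X ⟨1, by omega⟩ : MvPolynomial (Fin r) k) ^ 2 - X ⟨4, by omega⟩ ^ 2)
        + (X ⟨0, by omega⟩ - X ⟨2, by omega⟩) * (X ⟨1, by omega⟩ - X ⟨4, by omega⟩) *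
          ((X ⟨3, by omega⟩ : MvPolynomial (Fin r) k) ^ 2) := by
      rw [hL, hz]; ring
    rw [hfac]
    refine Ideal.add_mem _ (Ideal.add_mem _ ?_ ?_) ?_
    · exact Ideal.mul_mem_left _ _ (Ideal.sub_mem _ (hXmem _) (hXmem _))
    · exact Ideal.mul_mem_left _ _ (Ideal.sub_mem _ (hXmem _) (hXmem _))
    · exact Ideal.mul_mem_left _ _ (hXmem _)
  have hzI : z ∉ I := by
    intro hzI
    set m0 : Fin r →₀ ℕ := Finsupp.single (⟨0, by omega⟩ : Fin r) 1 +
      Finsupp.single (⟨1, by omega⟩ : Fin r) 1 + Finsupp.single (⟨3, by omega⟩ : Fin r) 1 with hm0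
    have hXXX : ∀ a b c' : Fin r, (X a : MvPolynomial (Fin r) k) * X b * X c'
        = monomial (Finsupp.single a 1 + Finsupp.single b 1 + Finsupp.single c' 1) (1:k) := by
      intro a b c'
      rw [X, X, X, monomial_mul, monomial_mul, one_mul, one_mul]
    have hcoeffz : coeff m0 z = 1 := by
      rw [hz, coeff_add, coeff_sub, coeff_sub, hXXX, hXXX, hXXX, hXXX,
        coeff_monomial, coeff_monomial, coeff_monomial, coeff_monomial]
      rw [if_pos rfl]
      rw [if_neg (fun h => by
        have := DFunLike.congr_fun h (⟨0, by omega⟩ : Fin r)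
        simp [hm0, Finsupp.single_apply, Fin.ext_iff] at this)]
      rw [if_neg (fun h => by
        have := DFunLike.congr_fun h (⟨1, by omega⟩ : Fin r)
        simp [hm0, Finsupp.single_apply, Fin.ext_iff] at this)]
      rw [if_neg (fun h => by
        have := DFunLike.congr_fun h (⟨0, by omega⟩ : Fin r)
        simp [hm0, Finsupp.single_apply, Fin.ext_iff] at this)]
      ring
    obtain ⟨i, hi⟩ := (memI z).mp hzI m0
      (mem_support_iff.mpr (by rw [hcoeffz]; exact one_ne_zero))
    have hab' : (⟨0, by omega⟩ : Fin r) ≠ ⟨1, by omega⟩ :=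
      Fin.ne_of_val_ne (show (0:ℕ) ≠ 1 by omega)
    have hac' : (⟨0, by omega⟩ : Fin r) ≠ ⟨3, by omega⟩ :=
      Fin.ne_of_val_ne (show (0:ℕ) ≠ 3 by omega)
    have hbc' : (⟨1, by omega⟩ : Fin r) ≠ ⟨3, by omega⟩ :=
      Fin.ne_of_val_ne (show (1:ℕ) ≠ 3 by omega)
    have hv1 : m0 (⟨0, by omega⟩ : Fin r) = 1 := by
      simp [hm0, Finsupp.single_apply, Ne.symm hab', Ne.symm hac']
    have hv2 : m0 (⟨1, by omega⟩ : Fin r) = 1 := by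
      simp [hm0, Finsupp.single_apply, hab', Ne.symm hbc']
    have hv3 : m0 (⟨3, by omega⟩ : Fin r) = 1 := by
      simp [hm0, Finsupp.single_apply, hac', hbc']
    have hv0 : ∀ t : Fin r, t ≠ ⟨0, by omega⟩ → t ≠ ⟨1, by omega⟩ → t ≠ ⟨3, by omega⟩ →
        m0 t = 0 := by
      intro t h1 h2 h3
      simp [hm0, Finsupp.single_apply, Ne.symm h1, Ne.symm h2, Ne.symm h3]
    have : m0 i ≤ 1 := by
      by_cases h1 : i = ⟨0, by omega⟩
      · rw [h1]; exact hv1.le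
      by_cases h2 : i = ⟨1, by omega⟩
      · rw [h2]; exact hv2.le
      by_cases h3 : i = ⟨3, by omega⟩
      · rw [h3]; exact hv3.le
      · rw [hv0 i h1 h2 h3]; omega
    omega
  refine ⟨?_, ?_, ?_⟩
  · -- injectivity of ×L on degree 2
    intro x hx hLx
    simp only [quotPiece, Submodule.mem_map] at hx
    obtain ⟨p, hp, rfl⟩ := hx
    have hp2 : p.IsHomogeneous 2 := (mem_homogeneousSubmodule _ _).mp hp
    simp only [AlgHom.toLinearMap_apply, Ideal.Quotient.mkₐ_eq_mk] at hLx ⊢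
    have hLp : L * p ∈ I := by
      rw [← Ideal.Quotient.eq_zero_iff_mem, map_mul]
      exact hLx
    rw [Ideal.Quotient.eq_zero_iff_mem]
    set c : Fin r → Fin r → k :=
      fun i j => coeff (Finsupp.single i 1 + Finsupp.single j 1) p with hcdef
    have csymm : ∀ i j, c i j = c j i := by
      intro i j
      simp only [hcdef]
      rw [add_comm]
    have key : ∀ a b c' : Fin r, a ≠ b → a ≠ c' → b ≠ c' →
        (if a.1 < 5 then c b c' else 0) + (if b.1 < 5 then c a c' else 0)
        + (if c'.1 < 5 then c a b else 0) = 0 := by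
      intro a b c' hab hac hbc
      simp only [hcdef]
      set m : Fin r →₀ ℕ := Finsupp.single a 1 + (Finsupp.single b 1 + Finsupp.single c' 1)
        with hm
      have hma : m a = 1 := by
        simp [hm, Finsupp.single_apply, (Ne.symm hab), (Ne.symm hac)]
      have hmb : m b = 1 := by
        simp [hm, Finsupp.single_apply, hab, (Ne.symm hbc)]
      have hmc : m c' = 1 := by
        simp [hm, Finsupp.single_apply, hac, hbc]
      have hmo : ∀ t, t ≠ a → t ≠ b → t ≠ c' → m t = 0 := by
        intro t h1 h2 h3
        simp [hm, Finsupp.single_apply, (Ne.symm h1), (Ne.symm h2), (Ne.symm h3)]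
      have hmle : ∀ i, m i ≤ 1 := by
        intro i
        by_cases h1 : i = a
        · subst h1; omega
        by_cases h2 : i = b
        · subst h2; omega
        by_cases h3 : i = c'
        · subst h3; omega
        · rw [hmo i h1 h2 h3]; omega
      have h0 : coeff m (L * p) = 0 := vanish _ hLp m hmle
      have hL5 : L = ∑ t ∈ Finset.univ.filter (fun t : Fin r => t.1 < 5), X t := by
        have hset : Finset.univ.filter (fun t : Fin r => t.1 < 5)
            = ({⟨0, by omega⟩, ⟨1, by omega⟩, ⟨2, by omega⟩, ⟨3, by omega⟩, ⟨4, by omega⟩}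
                : Finset (Fin r)) := by
          ext t
          simp [Finset.mem_filter, Fin.ext_iff]
          omega
        rw [hset]
        rw [Finset.sum_insert (by simp [Fin.ext_iff]), Finset.sum_insert (by simp [Fin.ext_iff]),
          Finset.sum_insert (by simp [Fin.ext_iff]), Finset.sum_insert (by simp [Fin.ext_iff]),
          Finset.sum_singleton, hL]
        ring
      rw [hL5, Finset.sum_mul] at h0
      rw [coeff_sum] at h0
      rw [Finset.sum_filter] at h0
      have hpt : ∀ t : Fin r, (if t.1 < 5 then coeff m (X t * p) else 0)
          = (if t = a then (if a.1 < 5 then coeff (m - Finsupp.single a 1) p else 0) else 0)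
          + (if t = b then (if b.1 < 5 then coeff (m - Finsupp.single b 1) p else 0) else 0)
          + (if t = c' then (if c'.1 < 5 then coeff (m - Finsupp.single c' 1) p else 0)
              else 0) := by
        intro t
        rw [coeff_X_mul']
        by_cases h1 : t = a
        · subst h1
          simp [hab, hac, Finsupp.mem_support_iff, hma]
        by_cases h2 : t = b
        · subst h2
          simp [Ne.symm hab, hbc, Finsupp.mem_support_iff, hmb]
        by_cases h3 : t = c'
        · subst h3
          simp [Ne.symm hac, Ne.symm hbc, Finsupp.mem_support_iff, hmc]
        · simp [h1, h2, h3, Finsupp.mem_support_iff, hmo t h1 h2 h3]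
      rw [Finset.sum_congr rfl (fun t _ => hpt t)] at h0
      rw [Finset.sum_add_distrib, Finset.sum_add_distrib, Fintype.sum_ite_eq',
        Fintype.sum_ite_eq', Fintype.sum_ite_eq'] at h0
      have hsa : m - Finsupp.single a 1 = Finsupp.single b 1 + Finsupp.single c' 1 := by
        rw [hm, add_tsub_cancel_left]
      have hsb : m - Finsupp.single b 1 = Finsupp.single a 1 + Finsupp.single c' 1 := by
        rw [hm, show Finsupp.single a 1 + (Finsupp.single b 1 + Finsupp.single c' 1)
          = Finsupp.single b 1 + (Finsupp.single a 1 + Finsupp.single c' 1) by abel,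
          add_tsub_cancel_left]
      have hsc : m - Finsupp.single c' 1 = Finsupp.single a 1 + Finsupp.single b 1 := by
        rw [hm, show Finsupp.single a 1 + (Finsupp.single b 1 + Finsupp.single c' 1)
          = Finsupp.single c' 1 + (Finsupp.single a 1 + Finsupp.single b 1) by abel,
          add_tsub_cancel_left]
      rw [hsa, hsb, hsc] at h0
      exact h0
    clear hI hL hz hLx hXmem hLzI hzI hp hLp vanish
    have hc : ∀ i j : Fin r, i ≠ j → c i j = 0 := by
      have ne5 : ∀ (u v : Fin r), u.1 ≠ v.1 → u ≠ v := fun u v h => by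
        intro he; exact h (by rw [he])
      set i0 : Fin r := ⟨0, by omega⟩ with hi0
      set i1 : Fin r := ⟨1, by omega⟩ with hi1
      set i2 : Fin r := ⟨2, by omega⟩ with hi2
      set i3 : Fin r := ⟨3, by omega⟩ with hi3
      set i4 : Fin r := ⟨4, by omega⟩ with hi4
      have hv0 : i0.1 = 0 := rfl
      have hv1 : i1.1 = 1 := rfl
      have hv2 : i2.1 = 2 := rfl
      have hv3 : i3.1 = 3 := rfl
      have hv4 : i4.1 = 4 := rfl
      have T : ∀ a b c' : Fin r, a.1 < 5 → b.1 < 5 → c'.1 < 5 → a ≠ b → a ≠ c' → b ≠ c' →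
          c b c' + c a c' + c a b = 0 := by
        intro a b c' ha hb hcc hab hac hbc
        have := key a b c' hab hac hbc
        rw [if_pos ha, if_pos hb, if_pos hcc] at this
        exact this
      have t012 := T i0 i1 i2 (by omega) (by omega) (by omega) (ne5 _ _ (by omega))
        (ne5 _ _ (by omega)) (ne5 _ _ (by omega))
      have t013 := T i0 i1 i3 (by omega) (by omega) (by omega) (ne5 _ _ (by omega))
        (ne5 _ _ (by omega)) (ne5 _ _ (by omega))
      have t014 := T i0 i1 i4 (by omega) (by omega) (by omega) (ne5 _ _ (by omega))
        (ne5 _ _ (by omega)) (ne5 _ _ (by omega))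
      have t023 := T i0 i2 i3 (by omega) (by omega) (by omega) (ne5 _ _ (by omega))
        (ne5 _ _ (by omega)) (ne5 _ _ (by omega))
      have t024 := T i0 i2 i4 (by omega) (by omega) (by omega) (ne5 _ _ (by omega))
        (ne5 _ _ (by omega)) (ne5 _ _ (by omega))
      have t034 := T i0 i3 i4 (by omega) (by omega) (by omega) (ne5 _ _ (by omega))
        (ne5 _ _ (by omega)) (ne5 _ _ (by omega))
      have t123 := T i1 i2 i3 (by omega) (by omega) (by omega) (ne5 _ _ (by omega))
        (ne5 _ _ (by omega)) (ne5 _ _ (by omega))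
      have t124 := T i1 i2 i4 (by omega) (by omega) (by omega) (ne5 _ _ (by omega))
        (ne5 _ _ (by omega)) (ne5 _ _ (by omega))
      have t134 := T i1 i3 i4 (by omega) (by omega) (by omega) (ne5 _ _ (by omega))
        (ne5 _ _ (by omega)) (ne5 _ _ (by omega))
      have t234 := T i2 i3 i4 (by omega) (by omega) (by omega) (ne5 _ _ (by omega))
        (ne5 _ _ (by omega)) (ne5 _ _ (by omega))
      have h01 : c i0 i1 = 0 := by
        linear_combination (1/3 : k) * t234 + (1/3 : k) * (t012 + t013 + t014)
          - (1/6 : k) * (t023 + t024 + t034 + t123 + t124 + t134)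
      have h02 : c i0 i2 = 0 := by
        linear_combination (1/3 : k) * t134 + (1/3 : k) * (t012 + t023 + t024)
          - (1/6 : k) * (t013 + t014 + t034 + t123 + t124 + t234)
      have h03 : c i0 i3 = 0 := by
        linear_combination (1/3 : k) * t124 + (1/3 : k) * (t013 + t023 + t034)
          - (1/6 : k) * (t012 + t014 + t024 + t123 + t134 + t234)
      have h04 : c i0 i4 = 0 := by
        linear_combination (1/3 : k) * t123 + (1/3 : k) * (t014 + t024 + t034)
          - (1/6 : k) * (t012 + t013 + t023 + t124 + t134 + t234)
      have h12 : c i1 i2 = 0 := by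
        linear_combination (1/3 : k) * t034 + (1/3 : k) * (t012 + t123 + t124)
          - (1/6 : k) * (t013 + t014 + t023 + t024 + t134 + t234)
      have h13 : c i1 i3 = 0 := by
        linear_combination (1/3 : k) * t024 + (1/3 : k) * (t013 + t123 + t134)
          - (1/6 : k) * (t012 + t014 + t023 + t034 + t124 + t234)
      have h14 : c i1 i4 = 0 := by
        linear_combination (1/3 : k) * t023 + (1/3 : k) * (t014 + t124 + t134)
          - (1/6 : k) * (t012 + t013 + t024 + t034 + t123 + t234)
      have h23 : c i2 i3 = 0 := by
        linear_combination (1/3 : k) * t014 + (1/3 : k) * (t023 + t123 + t234)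
          - (1/6 : k) * (t012 + t013 + t024 + t034 + t124 + t134)
      have h24 : c i2 i4 = 0 := by
        linear_combination (1/3 : k) * t013 + (1/3 : k) * (t024 + t124 + t234)
          - (1/6 : k) * (t012 + t014 + t023 + t034 + t123 + t134)
      have h34 : c i3 i4 = 0 := by
        linear_combination (1/3 : k) * t012 + (1/3 : k) * (t034 + t134 + t234)
          - (1/6 : k) * (t013 + t014 + t023 + t024 + t123 + t124)
      have hmix : ∀ j : Fin r, 5 ≤ j.1 →
          c i0 j = 0 ∧ c i1 j = 0 ∧ c i2 j = 0 ∧ c i3 j = 0 ∧ c i4 j = 0 := by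
        intro j hj
        have E : ∀ a b : Fin r, a.1 < 5 → b.1 < 5 → a ≠ b → c b j + c a j = 0 := by
          intro a b ha hb hab
          have := key a b j hab (ne5 _ _ (by omega)) (ne5 _ _ (by omega))
          rw [if_pos ha, if_pos hb, if_neg (by omega)] at this
          linear_combination this
        have e01 := E i0 i1 (by omega) (by omega) (ne5 _ _ (by omega))
        have e02 := E i0 i2 (by omega) (by omega) (ne5 _ _ (by omega))
        have e12 := E i1 i2 (by omega) (by omega) (ne5 _ _ (by omega))
        have e03 := E i0 i3 (by omega) (by omega) (ne5 _ _ (by omega))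
        have e04 := E i0 i4 (by omega) (by omega) (ne5 _ _ (by omega))
        refine ⟨?_, ?_, ?_, ?_, ?_⟩
        · linear_combination (1/2 : k) * (e01 + e02 - e12)
        · linear_combination (1/2 : k) * (e01 - e02 + e12)
        · linear_combination (1/2 : k) * (-e01 + e02 + e12)
        · linear_combination e03 - (1/2 : k) * (e01 + e02 - e12)
        · linear_combination e04 - (1/2 : k) * (e01 + e02 - e12)
      have hbig : ∀ i j : Fin r, 5 ≤ i.1 → 5 ≤ j.1 → i ≠ j → c i j = 0 := by
        intro i j hi hj hij
        have := key i0 i j (ne5 _ _ (by omega)) (ne5 _ _ (by omega)) hij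
        rw [if_pos (by omega), if_neg (by omega), if_neg (by omega)] at this
        linear_combination this
      have hfin5 : ∀ a : Fin r, a.1 < 5 → a = i0 ∨ a = i1 ∨ a = i2 ∨ a = i3 ∨ a = i4 := by
        intro a ha
        simp only [Fin.ext_iff, hv0, hv1, hv2, hv3, hv4]
        omega
      intro i j hij
      by_cases hi : i.1 < 5 <;> by_cases hj : j.1 < 5
      · rcases hfin5 i hi with rfl | rfl | rfl | rfl | rfl <;>
          rcases hfin5 j hj with rfl | rfl | rfl | rfl | rfl <;>
          first
            | exact absurd rfl hij
            | assumption
            | (rw [csymm]; assumption)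
      · rcases hfin5 i hi with rfl | rfl | rfl | rfl | rfl
        · exact (hmix j (by omega)).1
        · exact (hmix j (by omega)).2.1
        · exact (hmix j (by omega)).2.2.1
        · exact (hmix j (by omega)).2.2.2.1
        · exact (hmix j (by omega)).2.2.2.2
      · rw [csymm]
        rcases hfin5 j hj with rfl | rfl | rfl | rfl | rfl
        · exact (hmix i (by omega)).1
        · exact (hmix i (by omega)).2.1
        · exact (hmix i (by omega)).2.2.1
        · exact (hmix i (by omega)).2.2.2.1
        · exact (hmix i (by omega)).2.2.2.2
      · exact hbig i j (by omega) (by omega) hij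
    apply (memI p).mpr
    intro m hm
    by_contra hno
    push_neg at hno
    have hm1 : ∀ i, m i ≤ 1 := fun i => by have := hno i; omega
    have hcm : coeff m p ≠ 0 := mem_support_iff.mp hm
    have hdeg : m.degree = 2 := by
      by_contra h
      exact hcm (hp2.coeff_eq_zero h)
    have hone : ∀ i ∈ m.support, m i = 1 := fun i hi =>
      le_antisymm (hm1 i) (Nat.one_le_iff_ne_zero.mpr (Finsupp.mem_support_iff.mp hi))
    have hcard : m.support.card = 2 := by
      have : ∑ i ∈ m.support, m i = 2 := hdeg
      rw [Finset.sum_congr rfl hone] at this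
      simpa using this
    obtain ⟨i, j, hij, hsup⟩ := Finset.card_eq_two.mp hcard
    have hmeq : m = Finsupp.single i 1 + Finsupp.single j 1 := by
      ext x
      rw [Finsupp.add_apply, Finsupp.single_apply, Finsupp.single_apply]
      by_cases hx : x ∈ m.support
      · have h1 := hone x hx
        rw [hsup] at hx
        simp only [Finset.mem_insert, Finset.mem_singleton] at hx
        rcases hx with rfl | rfl
        · rw [if_pos rfl, if_neg (fun h : j = x => hij h.symm)]
          omega
        · rw [if_neg (fun h : _ = x => hij h), if_pos rfl]
          omega
      · have h0 : m x = 0 := Finsupp.notMem_support_iff.mp hx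
        rw [hsup] at hx
        simp only [Finset.mem_insert, Finset.mem_singleton] at hx
        push_neg at hx
        rw [if_neg (fun h : i = x => hx.1 h.symm), if_neg (fun h : j = x => hx.2 h.symm)]
        omega
    apply hcm
    rw [hmeq]
    have := hc i j hij
    simpa only [hcdef] using this
  · rw [Ne, Ideal.Quotient.eq_zero_iff_mem]
    exact hzI
  · rw [← map_mul, Ideal.Quotient.eq_zero_iff_mem]
    exact hLzI
end
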